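/- arXiv:1702.02375 — 2 statements merged into one kernel-verified Lean document; each statement's English description precedes it below -/
import Mathlib

section
/- Let B be an infinite primitive set of positive integers. Then the window W is topologically regular (W equals the closure of its interior in H) if and only if η is a Toeplitz sequence different from the all-zero sequence. -/
open Set MeasureTheory Filter Topology

namespace BFree

/-- The ambient compact group `∏_{b ∈ B} ℤ/bℤ`. -/
abbrev Gspace (B : Set ℕ+) : Type := ∀ b : B, ZMod ((b : ℕ+) : ℕ)

/-- The diagonal embedding `Δ : ℤ → ∏_{b ∈ B} ℤ/bℤ`. -/
def delta (B : Set ℕ+) : ℤ →+ Gspace B where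
  toFun n := fun b => (n : ZMod ((b : ℕ+) : ℕ))
  map_zero' := by funext b; simp
  map_add' m n := by funext b; simp

/-- `H`, the closure of `Δ(ℤ)`, as a (closed) subgroup of `Gspace B`. -/
def Hgrp (B : Set ℕ+) : AddSubgroup (Gspace B) :=
  (delta B).range.topologicalClosure

/-- `H` as a compact topological group. -/
abbrev Hspace (B : Set ℕ+) : Type := ↥(Hgrp B)

instance (B : Set ℕ+) : CompactSpace (Hspace B) :=
  isCompact_iff_compactSpace.mp
    (IsClosed.isCompact (AddSubgroup.isClosed_topologicalClosure _))

instance (B : Set ℕ+) : BorelSpace (Hspace B) := Subtype.borelSpace _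

/-- The window `W = {h ∈ H : h_b ≠ 0 for all b ∈ B}`. -/
def window (B : Set ℕ+) : Set (Hspace B) :=
  {h | ∀ b : B, (h : Gspace B) b ≠ 0}

/-- `Δ(n)` as an element of `H`. -/
def deltaH (B : Set ℕ+) (n : ℤ) : Hspace B :=
  ⟨delta B n, (delta B).range.le_topologicalClosure ⟨n, rfl⟩⟩

/-- The set of multiples `M_B ⊆ ℤ` of a set `B` of positive integers. -/
def MultSet (B : Set ℕ+) : Set ℤ := {n | ∃ b ∈ B, ((b : ℕ) : ℤ) ∣ n}

/-- The `B`-free set `F_B = ℤ ∖ M_B`. -/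
def FreeSet (B : Set ℕ+) : Set ℤ := {n | ∀ b ∈ B, ¬ ((b : ℕ) : ℤ) ∣ n}

/-- Set of multiples of a set of natural numbers. -/
def MultSetN (C : Set ℕ) : Set ℤ := {n | ∃ c ∈ C, (c : ℤ) ∣ n}

/-- Free set of a set of natural numbers. -/
def FreeSetN (C : Set ℕ) : Set ℤ := {n | ∀ c ∈ C, ¬ (c : ℤ) ∣ n}

/-- `#(M ∩ [1, N]) / N`. -/
noncomputable def densSeq (M : Set ℤ) (N : ℕ) : ℝ :=
  (Nat.card ↥(M ∩ Set.Icc (1 : ℤ) (N : ℤ)) : ℝ) / N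

/-- Lower (asymptotic) density of a set of integers. -/
noncomputable def lowerDensity (M : Set ℤ) : ℝ := Filter.liminf (densSeq M) Filter.atTop

/-- Upper (asymptotic) density of a set of integers. -/
noncomputable def upperDensity (M : Set ℤ) : ℝ := Filter.limsup (densSeq M) Filter.atTop

/-- `B` is taut if removing any element strictly decreases the lower density
of the set of multiples. -/
def Taut (B : Set ℕ+) : Prop :=
  ∀ b ∈ B, lowerDensity (MultSet (B \ {b})) < lowerDensity (MultSet B)

/-- `B` is primitive if no element divides another. -/
def Primitive (B : Set ℕ+) : Prop :=
  ∀ b ∈ B, ∀ b' ∈ B, (b : ℕ) ∣ (b' : ℕ) → b = b'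

/-- `lcm(S)` for a finite set of positive integers. -/
def lcmS (S : Finset ℕ+) : ℕ := S.lcm fun b => (b : ℕ)

/-- `A_S = {gcd(b, lcm S) : b ∈ B}`. -/
def ASet (B : Set ℕ+) (S : Finset ℕ+) : Set ℕ :=
  {m | ∃ b ∈ B, m = Nat.gcd (b : ℕ) (lcmS S)}

/-- The cylinder set `U_S(h) ⊆ H`. -/
def cyl (B : Set ℕ+) (S : Finset ℕ+) (hS : ↑S ⊆ B) (h : Hspace B) : Set (Hspace B) :=
  {h' | ∀ b, ∀ hb : b ∈ S, (h' : Gspace B) ⟨b, hS hb⟩ = (h : Gspace B) ⟨b, hS hb⟩}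

/-- `E = ⋃_{S ⊆ B finite} F_{A_S}`. -/
def Eset (B : Set ℕ+) : Set ℤ :=
  ⋃ (S : Finset ℕ+) (_ : ↑S ⊆ B), FreeSetN (ASet B S)

/-- `A_∞`. -/
def Ainfty (B : Set ℕ+) : Set ℕ :=
  {n | ∀ S : Finset ℕ+, ↑S ⊆ B →
    ∃ S' : Finset ℕ+, S ⊆ S' ∧ ↑S' ⊆ B ∧ n ∈ ASet B S' ∧ ∀ b ∈ S', (b : ℕ) ≠ n}

/-- The indicator `η` of the `B`-free set, as a point of `{0,1}^ℤ`. -/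
noncomputable def eta (B : Set ℕ+) : ℤ → Bool :=
  fun n => @decide (n ∈ FreeSet B) (Classical.propDecidable _)

/-- The left shift on `{0,1}^ℤ`, iterated `k` times (`k ∈ ℤ`). -/
def shift (k : ℤ) (x : ℤ → Bool) : ℤ → Bool := fun n => x (n + k)

/-- The orbit closure `X_η` of `η` in `{0,1}^ℤ`. -/
noncomputable def Xeta (B : Set ℕ+) : Set (ℤ → Bool) :=
  closure {x | ∃ k : ℤ, x = shift k (eta B)}

/-!
The points `Δ(n)` in the interior of `W` are exactly those with `n ∈ E`: a cylinder over `S`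
around `Δ(n)` contains a point with vanishing `b`-coordinate iff some `n + j·lcm S` is divisible
by `b`, i.e. iff `gcd(b, lcm S) ∣ n`. As `Δ(ℤ)` is dense in `H` and `W` is closed, `W` is
regular iff `F_B ⊆ E`.

If `n ∈ E` via `S` then `n + lcm(S)·ℤ ⊆ F_B`, which makes `η` Toeplitz; conversely, a `B`-free
progression `n + mℤ` puts `n` in `E`, witnessed by any `S` with every `gcd(b, m)` dividing `lcm S`.
For the approximation of `h ∈ W`, pick `x` with `Δ(x)` close to `h`: then `gcd(x, lcm S)` is
`B`-free because `h ∈ W`, hence in `E` via some `T`, and moving `x` inside its class mod `lcm S`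
so that it shares no more divisors with `lcm T` than `gcd(x, lcm S)` does lands in `E`.
-/

section Arithmetic

theorem exists_modEq_isCoprime {a : ℤ} {n k : ℕ} (hn : n ≠ 0) (hk : k ≠ 0)
    (ha : IsCoprime a n) : ∃ u : ℤ, u ≡ a [ZMOD n] ∧ IsCoprime u k := by
  have : NeZero (n * k) := ⟨mul_ne_zero hn hk⟩
  obtain ⟨w, hw⟩ := ZMod.unitsMap_surjective (dvd_mul_right n k) (ZMod.unitOfIsCoprime a ha)
  refine ⟨((w : ZMod (n * k)).val : ℤ), ?_, ?_⟩
  · rw [← ZMod.intCast_eq_intCast_iff]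
    have hw' := congrArg Units.val hw
    rw [ZMod.unitsMap_val, ZMod.coe_unitOfIsCoprime] at hw'
    rw [← hw']
    simp
  · have hcop := Nat.isCoprime_iff_coprime.mpr (ZMod.val_coe_unit_coprime w)
    push_cast at hcop
    exact hcop.of_mul_right_right

theorem exists_modEq_gcd_dvd (x : ℤ) {L Λ : ℕ} (hL : L ≠ 0) (hΛ : Λ ≠ 0) :
    ∃ m : ℤ, m ≡ x [ZMOD L] ∧ Int.gcd m Λ ∣ Int.gcd x L := by
  set D := Int.gcd x L
  have hD : 0 < D := Int.gcd_pos_of_ne_zero_right _ (by exact_mod_cast hL)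
  obtain ⟨x', L', hcop, hx, hL'⟩ : ∃ x' L' : ℤ, Int.gcd x' L' = 1 ∧ x = x' * D ∧ (L : ℤ) = L' * D :=
    Int.exists_gcd_one hD
  have hL'pos : 0 < L' := by
    have : (0 : ℤ) < L' * D := by rw [← hL']; omega
    exact pos_of_mul_pos_left this (by positivity)
  lift L' to ℕ using hL'pos.le
  obtain ⟨u, hu, hu_cop⟩ := exists_modEq_isCoprime (k := Λ) (by omega) hΛ
    (Int.isCoprime_iff_gcd_eq_one.mpr hcop)
  refine ⟨u * D, ?_, ?_⟩
  · rw [hx, hL']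
    exact_mod_cast hu.mul_right' (c := (D : ℤ))
  · have hdvd : ((Int.gcd (u * D) Λ : ℕ) : ℤ) ∣ D := by
      refine IsCoprime.dvd_of_dvd_mul_left ?_ (Int.gcd_dvd_left _ _)
      exact (hu_cop.of_isCoprime_of_dvd_right (Int.gcd_dvd_right _ _)).symm
    exact_mod_cast hdvd

theorem exists_dvd_add_mul_of_gcd_dvd {b m : ℕ} {z : ℤ} (h : (Nat.gcd b m : ℤ) ∣ z) :
    ∃ j : ℤ, (b : ℤ) ∣ z + j * m := by
  obtain ⟨c, rfl⟩ := h
  refine ⟨-Nat.gcdB b m * c, Nat.gcdA b m * c, ?_⟩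
  rw [Nat.gcd_eq_gcd_ab b m]
  ring

end Arithmetic

section Lcm

variable {B : Set ℕ+}

theorem lcmS_ne_zero (S : Finset ℕ+) : lcmS S ≠ 0 := by
  simp [lcmS, Finset.lcm_eq_zero_iff]

theorem dvd_lcmS {S : Finset ℕ+} {b : ℕ+} (hb : b ∈ S) : (b : ℕ) ∣ lcmS S :=
  Finset.dvd_lcm hb

theorem natCast_lcmS_dvd_iff {S : Finset ℕ+} {z : ℤ} :
    ((lcmS S : ℕ) : ℤ) ∣ z ↔ ∀ b ∈ S, ((b : ℕ) : ℤ) ∣ z := by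
  simp only [Int.natCast_dvd, lcmS, Finset.lcm_dvd_iff]

theorem exists_subset_forall_dvd_lcmS (G : Finset ℕ) (hG : ∀ g ∈ G, ∃ b ∈ B, g ∣ (b : ℕ)) :
    ∃ S : Finset ℕ+, ↑S ⊆ B ∧ ∀ g ∈ G, g ∣ lcmS S := by
  choose f hfB hf using hG
  refine ⟨G.attach.image fun g => f g.1 g.2, ?_, fun g hg => (hf g hg).trans (dvd_lcmS ?_)⟩
  · intro b hb
    obtain ⟨⟨g, hg⟩, -, rfl⟩ := Finset.mem_image.mp hb
    exact hfB g hg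
  · exact Finset.mem_image_of_mem _ (Finset.mem_attach _ ⟨g, hg⟩)

theorem mem_freeSetN_aSet_iff {S : Finset ℕ+} {n : ℤ} :
    n ∈ FreeSetN (ASet B S) ↔ ∀ b ∈ B, ¬ ((Nat.gcd b (lcmS S) : ℕ) : ℤ) ∣ n :=
  ⟨fun h b hb => h _ ⟨b, hb, rfl⟩, by rintro h _ ⟨b, hb, rfl⟩; exact h b hb⟩

theorem freeSetN_aSet_subset_freeSet (S : Finset ℕ+) : FreeSetN (ASet B S) ⊆ FreeSet B :=
  fun _ hn b hb hbn => mem_freeSetN_aSet_iff.mp hn b hb <|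
    (Int.natCast_dvd_natCast.mpr (Nat.gcd_dvd_left _ _)).trans hbn

theorem add_mul_lcmS_mem_freeSetN_aSet {S : Finset ℕ+} {n : ℤ} (hn : n ∈ FreeSetN (ASet B S))
    (j : ℤ) : n + j * lcmS S ∈ FreeSetN (ASet B S) :=
  fun c hc hdvd => hn c hc <| by
    obtain ⟨b, -, rfl⟩ := hc
    simpa using dvd_sub hdvd ((Int.natCast_dvd_natCast.mpr (Nat.gcd_dvd_right _ _)).mul_left j)

end Lcm

section Cylinders

variable {B : Set ℕ+}

theorem delta_apply_eq_zero_iff {n : ℤ} {b : B} : delta B n b = 0 ↔ ((b : ℕ) : ℤ) ∣ n :=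
  ZMod.intCast_zmod_eq_zero_iff_dvd n _

theorem delta_apply_eq_iff {m n : ℤ} {b : B} : delta B m b = delta B n b ↔ m ≡ n [ZMOD b] :=
  ZMod.intCast_eq_intCast_iff m n _

theorem denseRange_deltaH : DenseRange (deltaH B) := by
  rw [DenseRange, Topology.IsInducing.subtypeVal.dense_iff, ← Set.range_comp]
  exact fun x => x.2

theorem isOpen_setOf_apply_eq (b : B) (c : ZMod b) :
    IsOpen {y : Hspace B | (y : Gspace B) b = c} :=
  have hb : Continuous fun y : Hspace B => (y : Gspace B) b :=
    (continuous_apply b).comp continuous_subtype_val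
  (isOpen_discrete {c}).preimage hb

theorem isClosed_window : IsClosed (window B) := by
  simp only [window, Set.ofPred_forall]
  exact isClosed_iInter fun b =>
    (isClosed_discrete {0}ᶜ).preimage ((continuous_apply b).comp continuous_subtype_val)

theorem isOpen_cyl (S : Finset ℕ+) (hS : ↑S ⊆ B) (h : Hspace B) : IsOpen (cyl B S hS h) := by
  have hfin : {i : B | (i : ℕ+) ∈ S}.Finite :=
    S.finite_toSet.preimage Subtype.val_injective.injOn
  have hcyl : cyl B S hS h =
      Subtype.val ⁻¹' Set.pi {i : B | (i : ℕ+) ∈ S} fun i => {(h : Gspace B) i} := by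
    ext y
    simp only [cyl, Set.mem_preimage, Set.mem_pi, Set.mem_ofPred_eq, Set.mem_singleton_iff,
      Subtype.forall]
    exact ⟨fun hy a _ ha => hy a ha, fun hy b hb => hy b (hS hb) hb⟩
  rw [hcyl]
  exact (isOpen_set_pi hfin fun _ _ => isOpen_discrete _).preimage continuous_subtype_val

variable {S : Finset ℕ+} {hS : ↑S ⊆ B}

theorem mem_cyl_self (h : Hspace B) : h ∈ cyl B S hS h :=
  fun _ _ => rfl

theorem mem_cyl_comm {x y : Hspace B} : y ∈ cyl B S hS x ↔ x ∈ cyl B S hS y :=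
  ⟨fun h b hb => (h b hb).symm, fun h b hb => (h b hb).symm⟩

theorem mem_cyl_trans {x y z : Hspace B} (hzy : z ∈ cyl B S hS y) (hyx : y ∈ cyl B S hS x) :
    z ∈ cyl B S hS x :=
  fun b hb => (hzy b hb).trans (hyx b hb)

theorem deltaH_mem_cyl_deltaH_iff {m n : ℤ} :
    deltaH B m ∈ cyl B S hS (deltaH B n) ↔ m ≡ n [ZMOD lcmS S] := by
  rw [Int.modEq_iff_dvd, natCast_lcmS_dvd_iff]
  exact forall₂_congr fun b hb => delta_apply_eq_iff.trans Int.modEq_iff_dvd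

theorem exists_cyl_subset {O : Set (Hspace B)} (hO : IsOpen O) {x : Hspace B} (hx : x ∈ O) :
    ∃ (S : Finset ℕ+) (hS : ↑S ⊆ B), cyl B S hS x ⊆ O := by
  obtain ⟨O', hO', rfl⟩ := isOpen_induced_iff.mp hO
  obtain ⟨I, u, hu, hIu⟩ := isOpen_pi_iff.mp hO' _ hx
  refine ⟨I.image Subtype.val, fun b hb => ?_, fun y hy => hIu fun i hi => ?_⟩
  · obtain ⟨i, -, rfl⟩ := Finset.mem_image.mp hb
    exact i.2
  have hyi : (y : Gspace B) i = (x : Gspace B) i := hy i (Finset.mem_image_of_mem _ hi)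
  simpa [hyi] using (hu i hi).2

theorem apply_eq_of_mem_cyl_deltaH {x : ℤ} {y : Hspace B} (hy : y ∈ cyl B S hS (deltaH B x))
    {b : B} (hb : (b : ℕ) ∣ lcmS S) : (y : Gspace B) b = delta B x b := by
  obtain ⟨v, hvS, hvb⟩ := denseRange_deltaH.exists_mem_open
    ((isOpen_cyl S hS y).inter (isOpen_setOf_apply_eq b _)) ⟨y, mem_cyl_self y, rfl⟩
  have hv : v ≡ x [ZMOD lcmS S] := deltaH_mem_cyl_deltaH_iff.mp (mem_cyl_trans hvS hy)
  rw [← show delta B v b = (y : Gspace B) b from hvb]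
  exact delta_apply_eq_iff.mpr (hv.of_dvd (Int.natCast_dvd_natCast.mpr hb))

end Cylinders

section Window

variable {B : Set ℕ+}

theorem deltaH_mem_interior_window_iff {n : ℤ} :
    deltaH B n ∈ interior (window B) ↔ n ∈ Eset B := by
  simp only [Eset, Set.mem_iUnion, mem_freeSetN_aSet_iff]
  constructor
  · intro hn
    obtain ⟨S, hS, hSW⟩ := exists_cyl_subset isOpen_interior hn
    refine ⟨S, hS, fun b hb hdvd => ?_⟩
    obtain ⟨j, hj⟩ := exists_dvd_add_mul_of_gcd_dvd hdvd
    have hmem : deltaH B (n + j * lcmS S) ∈ cyl B S hS (deltaH B n) :=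
      deltaH_mem_cyl_deltaH_iff.mpr (by simp [Int.ModEq])
    exact interior_subset (hSW hmem) ⟨b, hb⟩ (delta_apply_eq_zero_iff.mpr hj)
  · rintro ⟨S, hS, hn⟩
    refine mem_interior.mpr ⟨cyl B S hS (deltaH B n), fun y hy b hyb => ?_,
      isOpen_cyl S hS _, mem_cyl_self _⟩
    obtain ⟨v, hvS, hvb⟩ := denseRange_deltaH.exists_mem_open
      ((isOpen_cyl S hS y).inter (isOpen_setOf_apply_eq b 0)) ⟨y, mem_cyl_self y, hyb⟩
    have hv : v ≡ n [ZMOD lcmS S] := deltaH_mem_cyl_deltaH_iff.mp (mem_cyl_trans hvS hy)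
    have hbv : ((b : ℕ) : ℤ) ∣ v := delta_apply_eq_zero_iff.mp hvb
    have hgL : ((Nat.gcd b (lcmS S) : ℕ) : ℤ) ∣ lcmS S :=
      Int.natCast_dvd_natCast.mpr (Nat.gcd_dvd_right _ _)
    exact hn b b.2 <| (hv.of_dvd hgL).dvd_iff.mp <|
      (Int.natCast_dvd_natCast.mpr (Nat.gcd_dvd_left _ _)).trans hbv

theorem freeSet_subset_eset_of_window_eq_closure_interior
    (hreg : window B = closure (interior (window B))) : FreeSet B ⊆ Eset B := by
  classical
  intro n hn
  -- every `gcd(b, lcm T)` dividing `n` divides `lcm S`, so it also divides any `w ≡ n [ZMOD lcm S]`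
  obtain ⟨S, hSB, hS⟩ := exists_subset_forall_dvd_lcmS (B := B)
    (n.natAbs.divisors.filter fun g => ∃ b ∈ B, g ∣ (b : ℕ)) fun g hg => (Finset.mem_filter.mp hg).2
  have hnW : deltaH B n ∈ closure (interior (window B)) :=
    hreg ▸ fun b hb => hn b b.2 (delta_apply_eq_zero_iff.mp hb)
  obtain ⟨w, hwS, hwW⟩ := denseRange_deltaH.exists_mem_open
    ((isOpen_cyl S hSB _).inter isOpen_interior)
    (mem_closure_iff.mp hnW _ (isOpen_cyl S hSB _) (mem_cyl_self _))
  obtain ⟨T, hTB, hwT⟩ := Set.mem_iUnion₂.mp (deltaH_mem_interior_window_iff.mp hwW)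
  have hwn : w ≡ n [ZMOD lcmS S] := deltaH_mem_cyl_deltaH_iff.mp hwS
  refine Set.mem_iUnion₂.mpr ⟨T, hTB, mem_freeSetN_aSet_iff.mpr fun b hb hdvd => ?_⟩
  have hn0 : n ≠ 0 := by
    rintro rfl
    exact hn b hb (dvd_zero _)
  have hgS : Nat.gcd b (lcmS T) ∣ lcmS S := hS _ <| Finset.mem_filter.mpr
    ⟨Nat.mem_divisors.mpr ⟨Int.natCast_dvd.mp hdvd, by omega⟩, b, hb, Nat.gcd_dvd_left _ _⟩
  exact mem_freeSetN_aSet_iff.mp hwT b hb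
    ((hwn.of_dvd (Int.natCast_dvd_natCast.mpr hgS)).dvd_iff.mpr hdvd)

theorem window_eq_closure_interior_of_freeSet_subset_eset (hFE : FreeSet B ⊆ Eset B) :
    window B = closure (interior (window B)) := by
  refine Set.Subset.antisymm (fun h hW => mem_closure_iff.mpr fun O hO hhO => ?_)
    (closure_minimal interior_subset isClosed_window)
  obtain ⟨S, hSB, hSO⟩ := exists_cyl_subset hO hhO
  obtain ⟨x, hx⟩ := denseRange_deltaH.exists_mem_open (isOpen_cyl S hSB h) ⟨h, mem_cyl_self h⟩
  have hD : (Int.gcd x (lcmS S) : ℤ) ∈ FreeSet B := fun b hb hbD => by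
    have hbL : (b : ℕ) ∣ lcmS S := Int.natCast_dvd_natCast.mp (hbD.trans (Int.gcd_dvd_right _ _))
    apply hW ⟨b, hb⟩
    rw [apply_eq_of_mem_cyl_deltaH (mem_cyl_comm.mp hx) hbL]
    exact delta_apply_eq_zero_iff.mpr (hbD.trans (Int.gcd_dvd_left _ _))
  obtain ⟨T, hTB, hDT⟩ := Set.mem_iUnion₂.mp (hFE hD)
  obtain ⟨m, hmx, hmD⟩ := exists_modEq_gcd_dvd x (lcmS_ne_zero S) (lcmS_ne_zero T)
  have hmE : m ∈ Eset B := Set.mem_iUnion₂.mpr ⟨T, hTB, mem_freeSetN_aSet_iff.mpr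
    fun b hb hbm => mem_freeSetN_aSet_iff.mp hDT b hb <| Int.natCast_dvd_natCast.mpr <|
      (Int.dvd_gcd hbm (Int.natCast_dvd_natCast.mpr (Nat.gcd_dvd_right _ _))).trans hmD⟩
  exact ⟨deltaH B m, hSO (mem_cyl_trans (deltaH_mem_cyl_deltaH_iff.mpr hmx) hx),
    deltaH_mem_interior_window_iff.mpr hmE⟩

theorem window_eq_closure_interior_iff_freeSet_subset_eset :
    window B = closure (interior (window B)) ↔ FreeSet B ⊆ Eset B :=
  ⟨freeSet_subset_eset_of_window_eq_closure_interior,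
    window_eq_closure_interior_of_freeSet_subset_eset⟩

end Window

section Toeplitz

variable {B : Set ℕ+}

theorem eta_eq_true_iff {n : ℤ} : eta B n = true ↔ n ∈ FreeSet B :=
  @decide_eq_true_iff _ (Classical.propDecidable _)

theorem eta_eq_eta_iff {m n : ℤ} : eta B m = eta B n ↔ (m ∈ FreeSet B ↔ n ∈ FreeSet B) := by
  rw [Bool.eq_iff_iff, eta_eq_true_iff, eta_eq_true_iff]

theorem mem_eset_of_forall_add_mul_mem_freeSet {z : ℤ} {m : ℕ} (hm : 0 < m)
    (hper : ∀ j : ℤ, z + j * m ∈ FreeSet B) : z ∈ Eset B := by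
  classical
  obtain ⟨S, hSB, hS⟩ := exists_subset_forall_dvd_lcmS (B := B)
    (m.divisors.filter fun g => ∃ b ∈ B, g ∣ (b : ℕ)) fun g hg => (Finset.mem_filter.mp hg).2
  refine Set.mem_iUnion₂.mpr ⟨S, hSB, mem_freeSetN_aSet_iff.mpr fun b hb hdvd => ?_⟩
  have hgS : Nat.gcd b m ∣ lcmS S := hS _ <| Finset.mem_filter.mpr
    ⟨Nat.mem_divisors.mpr ⟨Nat.gcd_dvd_right _ _, hm.ne'⟩, b, hb, Nat.gcd_dvd_left _ _⟩
  obtain ⟨j, hj⟩ := exists_dvd_add_mul_of_gcd_dvd <|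
    (Int.natCast_dvd_natCast.mpr (Nat.dvd_gcd (Nat.gcd_dvd_left _ _) hgS)).trans hdvd
  exact hper j b hb hj

theorem exists_period_eta_of_freeSet_subset_eset (hFE : FreeSet B ⊆ Eset B) (n : ℤ) :
    ∃ m : ℕ, 0 < m ∧ ∀ j : ℤ, eta B (n + j * m) = eta B n := by
  by_cases hn : n ∈ FreeSet B
  · obtain ⟨S, -, hnS⟩ := Set.mem_iUnion₂.mp (hFE hn)
    exact ⟨lcmS S, Nat.pos_of_ne_zero (lcmS_ne_zero S), fun j => eta_eq_eta_iff.mpr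
      (iff_of_true (freeSetN_aSet_subset_freeSet S (add_mul_lcmS_mem_freeSetN_aSet hnS j)) hn)⟩
  · obtain ⟨b, hb, hbn⟩ : ∃ b ∈ B, ((b : ℕ) : ℤ) ∣ n := by simpa [FreeSet] using hn
    refine ⟨b, b.pos, fun j => eta_eq_eta_iff.mpr (iff_of_false (fun h => ?_) hn)⟩
    exact h b hb (dvd_add hbn (dvd_mul_left _ _))

theorem one_mem_freeSet (hB : B.Infinite) (hprim : Primitive B) : (1 : ℤ) ∈ FreeSet B := by
  intro b hb hb1
  obtain rfl : b = 1 :=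
    PNat.coe_eq_one_iff.mp (Nat.dvd_one.mp (by simpa using Int.natCast_dvd.mp hb1))
  obtain ⟨b', ⟨hb', hb'1⟩⟩ := (hB.sdiff (Set.finite_singleton 1)).nonempty
  exact hb'1 (hprim 1 hb b' hb' (one_dvd _)).symm

end Toeplitz

/-- For an infinite primitive set `B` of positive integers, the window `W` is
topologically regular iff `η` is a Toeplitz sequence different from the all-zero sequence. -/
theorem statement4 (B : Set ℕ+) (hB : B.Infinite) (hprim : Primitive B) :
    window B = closure (interior (window B)) ↔
      ((∀ n : ℤ, ∃ m : ℕ, 0 < m ∧ ∀ j : ℤ, eta B (n + j * m) = eta B n) ∧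
        eta B ≠ fun _ => false) := by
  rw [window_eq_closure_interior_iff_freeSet_subset_eset]
  constructor
  · intro hFE
    refine ⟨exists_period_eta_of_freeSet_subset_eset hFE, fun h0 => ?_⟩
    simpa [h0] using eta_eq_true_iff.mpr (one_mem_freeSet hB hprim)
  · rintro ⟨htoep, -⟩ z hz
    obtain ⟨m, hm, hper⟩ := htoep z
    exact mem_eset_of_forall_add_mul_mem_freeSet hm fun j =>
      eta_eq_true_iff.mp ((hper j).trans (eta_eq_true_iff.mpr hz))

end BFree
end

section
/- Let B be an infinite primitive set of positive integers. Then the window W is topologically aperiodic: if h ∈ H satisfies W + h = W, then h = 0. -/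
open Set MeasureTheory Filter Topology

namespace BFree

/-! Suppose `W + h = W` and `h_{b₀} = x ≠ 0` in `ℤ/b₀ℤ`. Then `W + k h = W` for every `k ∈ ℤ`.
Put `m = gcd(x, b₀)`: no `b ∈ B` divides `m`, since it would divide `b₀`, hence equal `b₀` by
primitivity, and `b₀ ∤ x`; so `Δ(m) ∈ W`. By Bézout `m = k x` in `ℤ/b₀ℤ`, so `Δ(m) - k h` lies in
`W` and has vanishing `b₀`-coordinate, which is absurd. -/

open Pointwise

theorem add_zsmul_mem_of_image_add_right_eq {G : Type*} [AddCommGroup G] {A : Set G} {h : G}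
    (hA : (fun w => w + h) '' A = A) (k : ℤ) {w : G} (hw : w ∈ A) : w + k • h ∈ A := by
  have hstab : h ∈ AddAction.stabilizer G A := by
    rw [AddAction.mem_stabilizer_iff, ← Set.image_vadd]
    simpa only [vadd_eq_add, add_comm h] using hA
  have hk : k • h +ᵥ A = A := AddAction.mem_stabilizer_iff.mp (zsmul_mem hstab k)
  rw [← hk, add_comm]
  exact Set.vadd_mem_vadd_set hw

theorem ZMod.exists_zsmul_eq_gcd_val {N : ℕ} [NeZero N] (x : ZMod N) :
    ∃ k : ℤ, k • x = ((x.val.gcd N : ℕ) : ZMod N) := by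
  refine ⟨x.val.gcdA N, ?_⟩
  have hbezout := congrArg (Int.cast : ℤ → ZMod N) (Nat.gcd_eq_gcd_ab x.val N)
  push_cast at hbezout
  rw [hbezout, ZMod.natCast_self, zero_mul, add_zero, ZMod.natCast_val, ZMod.cast_id,
    zsmul_eq_mul, mul_comm]

theorem Primitive.natCast_gcd_val_mem_freeSet {B : Set ℕ+} (hprim : Primitive B) {b₀ : ℕ+}
    (hb₀ : b₀ ∈ B) {x : ZMod b₀} (hx : x ≠ 0) : ((x.val.gcd b₀ : ℕ) : ℤ) ∈ FreeSet B := by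
  intro b hb hdvd
  have hbm : (b : ℕ) ∣ x.val.gcd b₀ := Int.natCast_dvd_natCast.mp hdvd
  obtain rfl : b = b₀ := hprim b hb b₀ hb₀ (hbm.trans (Nat.gcd_dvd_right _ _))
  apply hx
  rw [← ZMod.natCast_zmod_val x, ZMod.natCast_eq_zero_iff]
  exact hbm.trans (Nat.gcd_dvd_left _ _)

theorem deltaH_mem_window_iff {B : Set ℕ+} {n : ℤ} : deltaH B n ∈ window B ↔ n ∈ FreeSet B := by
  simp only [window, FreeSet, deltaH, delta, Set.mem_ofPred_eq, AddMonoidHom.coe_mk,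
    ZeroHom.coe_mk, ne_eq, ZMod.intCast_zmod_eq_zero_iff_dvd, Subtype.forall]

theorem statement12_general (B : Set ℕ+) (hprim : Primitive B) :
    ∀ h : Hspace B, (fun w => w + h) '' window B = window B → h = 0 := by
  intro h hW
  ext b₀ : 2
  by_contra hx
  obtain ⟨k, hk⟩ := ZMod.exists_zsmul_eq_gcd_val ((h : Gspace B) b₀)
  have hm := deltaH_mem_window_iff.mpr (hprim.natCast_gcd_val_mem_freeSet b₀.2 hx)
  refine add_zsmul_mem_of_image_add_right_eq hW (-k) hm b₀ ?_
  simp [deltaH, delta, ← hk, zsmul_eq_mul]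

/-- For an infinite primitive set `B` of positive integers the window `W` is
topologically aperiodic: if `h ∈ H` satisfies `W + h = W`, then `h = 0`. -/
theorem statement12 (B : Set ℕ+) (hB : B.Infinite) (hprim : Primitive B) :
    ∀ h : Hspace B, (fun w => w + h) '' window B = window B → h = 0 :=
  statement12_general B hprim

end BFree
end
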